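/- arXiv:1303.3794 — 2 statements merged into one kernel-verified Lean document; each statement's English description precedes it below -/
import Mathlib

section
/- Let R = Z/p^k Z and let P be the l × m matrix over R with P_{i,j} = δ_{i,j}·p^{r_i}, 0 ≤ r_1 ≤ ⋯ ≤ r_l < k; extend r_i = k for l < i ≤ m. For invertible m × m matrices M, M' over R, the row spaces ⟨PM⟩ and ⟨PM'⟩ are equal if and only if for all j > i, the p-degree of the (i,j)-entry of MM'^{-1} is at least r_j − r_i. -/
/-- The subgroup of `R^m` generated by the rows of a matrix `X`. -/
def rowSpace {R : Type*} [CommRing R] {l m : ℕ} (X : Matrix (Fin l) (Fin m) R) :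
    AddSubgroup (Fin m → R) :=
  AddSubgroup.closure (Set.range fun i => X i)

/-- The `p`-degree of an element of `ZMod (p^k)`: the unique `r` with `x = p^r · χ`,
`χ` a unit (and `r = k` for `x = 0`). -/
noncomputable def pDeg (p k : ℕ) (x : ZMod (p ^ k)) : ℕ :=
  sInf {r : ℕ | ∃ χ : ZMod (p ^ k), IsUnit χ ∧ x = (p : ZMod (p ^ k)) ^ r * χ}

/-!
Put `N = M * M'⁻¹`. Right multiplication by the invertible `M'` is injective on subgroups, so
`⟨PM⟩ = ⟨PM'⟩` iff `⟨PN⟩ = ⟨P⟩`. The rows of `P` are the first `l` rows of the diagonal matrix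
`D = diag (p ^ rext j)`, whose remaining rows are `p ^ k = 0`; so `P` may be replaced by `D`, whose
row space (over `ZMod (p ^ k)` additive subgroups are submodules) consists of the vectors whose
`j`-th entry is divisible by `p ^ rext j`. Since `R^m` is finite and `N` invertible, `⟨DN⟩ = ⟨D⟩`
as soon as `⟨DN⟩ ≤ ⟨D⟩`, i.e. `p ^ rext j ∣ p ^ rext i * N i j` for all `i, j`. For `j ≤ i` this
holds by monotonicity, and for `i < j` it says that the `p`-degree of `N i j` is at least
`rext j - rext i`.
-/

namespace ZMod

theorem natCast_dvd_iff_dvd_val {n d : ℕ} [NeZero n] (hd : d ∣ n) (x : ZMod n) :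
    (d : ZMod n) ∣ x ↔ d ∣ x.val := by
  constructor
  · rintro ⟨y, rfl⟩
    rw [← natCast_zmod_val y, ← Nat.cast_mul, val_natCast, Nat.dvd_mod_iff hd]
    exact dvd_mul_right d _
  · rintro ⟨t, ht⟩
    rw [← natCast_zmod_val x, ht, Nat.cast_mul]
    exact dvd_mul_right _ _

theorem natCast_mul_dvd_mul_iff {n d e : ℕ} [NeZero n] (hde : d * e ∣ n) (hd : d ≠ 0)
    (x : ZMod n) : ((d * e : ℕ) : ZMod n) ∣ d * x ↔ (e : ZMod n) ∣ x := by
  have hval : (d * x).val = d * x.val % n := by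
    rw [← val_natCast n, Nat.cast_mul, natCast_zmod_val]
  rw [natCast_dvd_iff_dvd_val hde, natCast_dvd_iff_dvd_val (dvd_of_mul_left_dvd hde), hval,
    Nat.dvd_mod_iff hde, Nat.mul_dvd_mul_iff_left (Nat.pos_of_ne_zero hd)]

theorem natCast_pow_dvd_pow_mul_iff {n p a b : ℕ} [NeZero n] (hp : p ≠ 0) (hpa : p ^ a ∣ n)
    (hba : b ≤ a) (x : ZMod n) :
    (p : ZMod n) ^ a ∣ (p : ZMod n) ^ b * x ↔ (p : ZMod n) ^ (a - b) ∣ x := by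
  have hsplit : p ^ a = p ^ b * p ^ (a - b) := by rw [← pow_add, Nat.add_sub_cancel' hba]
  rw [hsplit] at hpa
  simpa only [← Nat.cast_pow, ← hsplit] using
    natCast_mul_dvd_mul_iff hpa (pow_ne_zero b hp) x

end ZMod

section PDeg

variable {p k : ℕ}

theorem exists_eq_pow_mul_isUnit (hp : p.Prime) (x : ZMod (p ^ k)) :
    ∃ r, ∃ χ : ZMod (p ^ k), IsUnit χ ∧ x = (p : ZMod (p ^ k)) ^ r * χ := by
  have : NeZero (p ^ k) := ⟨pow_ne_zero k hp.ne_zero⟩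
  by_cases hx : x = 0
  · refine ⟨k, 1, isUnit_one, ?_⟩
    rw [hx, mul_one, ← Nat.cast_pow, ZMod.natCast_self]
  obtain ⟨r, u, hpu, hu⟩ := Nat.exists_eq_pow_mul_and_not_dvd
    ((ZMod.val_ne_zero x).mpr hx) p hp.ne_one
  refine ⟨r, u, ?_, ?_⟩
  · exact (ZMod.isUnit_iff_coprime u _).mpr
      (((hp.coprime_iff_not_dvd).mpr hpu).symm.pow_right k)
  · rw [← ZMod.natCast_zmod_val x, hu, Nat.cast_mul, Nat.cast_pow]

theorem le_pDeg_iff (hp : p.Prime) {s : ℕ} (hs : s ≤ k) (x : ZMod (p ^ k)) :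
    s ≤ pDeg p k x ↔ (p : ZMod (p ^ k)) ^ s ∣ x := by
  have : NeZero (p ^ k) := ⟨pow_ne_zero k hp.ne_zero⟩
  have hne : {r | ∃ χ : ZMod (p ^ k), IsUnit χ ∧ x = (p : ZMod (p ^ k)) ^ r * χ}.Nonempty :=
    exists_eq_pow_mul_isUnit hp x
  constructor
  · intro hle
    obtain ⟨χ, -, hx⟩ := Nat.sInf_mem hne
    rw [hx]
    exact (pow_dvd_pow _ hle).mul_right χ
  · refine fun hdvd => le_csInf hne ?_
    rintro r ⟨χ, hχ, rfl⟩
    by_contra! hrs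
    have hχdvd := (ZMod.natCast_pow_dvd_pow_mul_iff hp.ne_zero (pow_dvd_pow p hs) hrs.le χ).mp hdvd
    have hp_unit : IsUnit (p : ZMod (p ^ k)) :=
      isUnit_of_dvd_unit ((dvd_pow_self _ (Nat.sub_ne_zero_of_lt hrs)).trans hχdvd) hχ
    rw [ZMod.isUnit_iff_coprime, Nat.coprime_pow_right_iff (by omega), Nat.coprime_self] at hp_unit
    exact hp.ne_one hp_unit

theorem pow_dvd_pow_mul_iff_sub_le_pDeg (hp : p.Prime) {a b : ℕ} (ha : a ≤ k) (x : ZMod (p ^ k)) :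
    (p : ZMod (p ^ k)) ^ a ∣ (p : ZMod (p ^ k)) ^ b * x ↔ a - b ≤ pDeg p k x := by
  have : NeZero (p ^ k) := ⟨pow_ne_zero k hp.ne_zero⟩
  rcases le_total a b with hab | hba
  · simpa [Nat.sub_eq_zero_of_le hab] using (pow_dvd_pow _ hab).mul_right x
  · rw [ZMod.natCast_pow_dvd_pow_mul_iff hp.ne_zero (pow_dvd_pow p ha) hba,
      le_pDeg_iff hp ((Nat.sub_le a b).trans ha)]

theorem forall_pow_dvd_pow_mul_iff_le_pDeg (hp : p.Prime) {m : ℕ} {e : Fin m → ℕ}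
    (he : Monotone e) (hek : ∀ j, e j ≤ k) (N : Matrix (Fin m) (Fin m) (ZMod (p ^ k))) :
    (∀ i j, (p : ZMod (p ^ k)) ^ e j ∣ (p : ZMod (p ^ k)) ^ e i * N i j) ↔
      ∀ i j, i < j → e j - e i ≤ pDeg p k (N i j) := by
  refine forall₂_congr fun i j => ?_
  rw [pow_dvd_pow_mul_iff_sub_le_pDeg hp (hek j)]
  refine ⟨fun h _ => h, fun h => ?_⟩
  rcases lt_or_ge i j with hij | hji
  · exact h hij
  · rw [Nat.sub_eq_zero_of_le (he hji)]
    exact Nat.zero_le _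

end PDeg

section RowSpace

variable {R : Type*} [CommRing R] {l m n : ℕ}

theorem rowSpace_le_iff {X : Matrix (Fin l) (Fin m) R} {H : AddSubgroup (Fin m → R)} :
    rowSpace X ≤ H ↔ ∀ i, X i ∈ H := by
  rw [rowSpace, AddSubgroup.closure_le, Set.range_subset_iff]
  rfl

theorem rowSpace_mul (X : Matrix (Fin l) (Fin m) R) (N : Matrix (Fin m) (Fin n) R) :
    rowSpace (X * N) = (rowSpace X).map (Matrix.vecMulLinear N).toAddMonoidHom := by
  rw [rowSpace, rowSpace, AddMonoidHom.map_closure, ← Set.range_comp]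
  rfl

theorem rowSpace_mul_eq_mul_iff {X Y : Matrix (Fin l) (Fin m) R} {N : Matrix (Fin m) (Fin m) R}
    (hN : IsUnit N) : rowSpace (X * N) = rowSpace (Y * N) ↔ rowSpace X = rowSpace Y := by
  rw [rowSpace_mul, rowSpace_mul]
  exact (AddSubgroup.map_injective (Matrix.vecMul_injective_of_isUnit hN)).eq_iff

theorem rowSpace_mul_eq_self_iff [Finite R] {X : Matrix (Fin l) (Fin m) R}
    {N : Matrix (Fin m) (Fin m) R} (hN : IsUnit N) :
    rowSpace (X * N) = rowSpace X ↔ rowSpace (X * N) ≤ rowSpace X := by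
  refine ⟨le_of_eq, fun hle => AddSubgroup.eq_of_le_of_card_ge hle ?_⟩
  rw [rowSpace_mul, AddSubgroup.card_map_of_injective (Matrix.vecMul_injective_of_isUnit hN)]

theorem rowSpace_submatrix (X : Matrix (Fin m) (Fin n) R) (f : Fin l → Fin m)
    (hX : ∀ j, j ∉ Set.range f → X j = 0) : rowSpace (X.submatrix f id) = rowSpace X := by
  refine le_antisymm (AddSubgroup.closure_mono ?_) (rowSpace_le_iff.mpr fun j => ?_)
  · rintro _ ⟨i, rfl⟩
    exact ⟨f i, rfl⟩
  · by_cases hj : j ∈ Set.range f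
    · obtain ⟨i, rfl⟩ := hj
      exact AddSubgroup.subset_closure ⟨i, rfl⟩
    · rw [hX j hj]
      exact zero_mem _

theorem rowSpace_eq_rowSpace_diagonal {P : Matrix (Fin l) (Fin m) R} {d : Fin m → R}
    (hlm : l ≤ m) (hP : ∀ i j, P i j = if (i : ℕ) = (j : ℕ) then d j else 0)
    (hd : ∀ j : Fin m, l ≤ (j : ℕ) → d j = 0) : rowSpace P = rowSpace (Matrix.diagonal d) := by
  have hPd : P = (Matrix.diagonal d).submatrix (Fin.castLE hlm) id := by
    ext i j
    simp only [hP, Matrix.submatrix_apply, id, Matrix.diagonal_apply, Fin.ext_iff,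
      Fin.val_castLE]
    split_ifs with hij
    · exact congrArg d (Fin.ext hij.symm)
    · rfl
  refine hPd ▸ rowSpace_submatrix _ _ fun j hj => ?_
  have hjl : l ≤ (j : ℕ) := not_lt.mp fun h => hj ⟨⟨j, h⟩, rfl⟩
  ext j'
  simp [Matrix.diagonal_apply, hd j hjl]

end RowSpace

section ZModRowSpace

open scoped Matrix

variable {n l m : ℕ}

theorem mem_rowSpace_iff_exists_vecMul {X : Matrix (Fin l) (Fin m) (ZMod n)}
    {v : Fin m → ZMod n} : v ∈ rowSpace X ↔ ∃ c, c ᵥ* X = v := by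
  constructor
  · refine fun hv => LinearMap.mem_range.mp
      ((rowSpace_le_iff (H := (LinearMap.range X.vecMulLinear).toAddSubgroup)).mpr ?_ hv)
    intro i
    exact ⟨Pi.single i 1, Matrix.single_one_vecMul i X⟩
  · rintro ⟨c, rfl⟩
    rw [Matrix.vecMul_eq_sum]
    exact sum_mem fun i _ => ZMod.smul_mem (AddSubgroup.subset_closure (Set.mem_range_self i)) (c i)

theorem mem_rowSpace_diagonal_iff {d v : Fin m → ZMod n} :
    v ∈ rowSpace (Matrix.diagonal d) ↔ ∀ j, d j ∣ v j := by
  simp only [mem_rowSpace_iff_exists_vecMul, funext_iff, Matrix.vecMul_diagonal]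
  constructor
  · rintro ⟨c, hc⟩ j
    exact ⟨c j, by rw [← hc, mul_comm]⟩
  · intro hd
    choose c hc using hd
    exact ⟨c, fun j => by rw [hc, mul_comm]⟩

theorem rowSpace_diagonal_mul_le_iff (d : Fin m → ZMod n) (N : Matrix (Fin m) (Fin m) (ZMod n)) :
    rowSpace (Matrix.diagonal d * N) ≤ rowSpace (Matrix.diagonal d) ↔
      ∀ i j, d j ∣ d i * N i j := by
  simp only [rowSpace_le_iff, mem_rowSpace_diagonal_iff, Matrix.diagonal_mul]

end ZModRowSpace

theorem stmt4_general (p : ℕ) (hp : p.Prime) (k : ℕ) (l m : ℕ) (hlm : l ≤ m)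
    (r : Fin l → ℕ) (hmono : Monotone r) (hr : ∀ i, r i < k)
    (P : Matrix (Fin l) (Fin m) (ZMod (p ^ k)))
    (hP : ∀ i j, P i j = if (i : ℕ) = (j : ℕ) then (p : ZMod (p ^ k)) ^ (r i) else 0)
    (rext : Fin m → ℕ) (hrext : ∀ j : Fin m, rext j = if h : (j : ℕ) < l then r ⟨j, h⟩ else k)
    (M M' : Matrix (Fin m) (Fin m) (ZMod (p ^ k))) (hM : IsUnit M) (hM' : IsUnit M') :
    rowSpace (P * M) = rowSpace (P * M') ↔
      ∀ i j : Fin m, i < j → rext j - rext i ≤ pDeg p k ((M * M'⁻¹) i j) := by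
  have : NeZero (p ^ k) := ⟨pow_ne_zero k hp.ne_zero⟩
  have hrext_le : ∀ j, rext j ≤ k := fun j => by
    rw [hrext]; split_ifs
    exacts [(hr _).le, le_rfl]
  have hrext_mono : Monotone rext := fun i j hij => by
    rw [hrext, hrext]; split_ifs with hi hj hj
    exacts [hmono hij, (hr _).le, absurd ((Fin.le_def.mp hij).trans_lt hj) hi, le_rfl]
  have hPD : rowSpace P = rowSpace (Matrix.diagonal fun j => (p : ZMod (p ^ k)) ^ rext j) := by
    refine rowSpace_eq_rowSpace_diagonal hlm (fun i j => ?_) (fun j hj => ?_)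
    · rw [hP]
      split_ifs with hij
      · rw [hrext, dif_pos (hij ▸ i.2)]
        congr 2
        exact Fin.ext hij
      · rfl
    · rw [hrext, dif_neg (not_lt.mpr hj), ← Nat.cast_pow, ZMod.natCast_self]
  set N := M * M'⁻¹
  have hN : IsUnit N := hM.mul (Matrix.isUnit_nonsing_inv_iff.mpr hM')
  have hNM' : N * M' = M :=
    Matrix.nonsing_inv_mul_cancel_right M' M ((Matrix.isUnit_iff_isUnit_det M').mp hM')
  rw [rowSpace_mul, rowSpace_mul P, hPD, ← rowSpace_mul, ← rowSpace_mul, ← hNM',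
    ← Matrix.mul_assoc, rowSpace_mul_eq_mul_iff hM', rowSpace_mul_eq_self_iff hN,
    rowSpace_diagonal_mul_le_iff]
  exact forall_pow_dvd_pow_mul_iff_le_pDeg hp hrext_mono hrext_le N

/-- `⟨PM⟩ = ⟨PM'⟩` iff for all `j > i` the `p`-degree of `(M M'⁻¹) i j` is at least
`r j - r i`, where `r` is extended by `r i = k` for `i > l`. -/
theorem stmt4 (p : ℕ) (hp : p.Prime) (k : ℕ) (hk : 1 ≤ k) (l m : ℕ) (hlm : l ≤ m)
    (r : Fin l → ℕ) (hmono : Monotone r) (hr : ∀ i, r i < k)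
    (P : Matrix (Fin l) (Fin m) (ZMod (p ^ k)))
    (hP : ∀ i j, P i j = if (i : ℕ) = (j : ℕ) then (p : ZMod (p ^ k)) ^ (r i) else 0)
    (rext : Fin m → ℕ) (hrext : ∀ j : Fin m, rext j = if h : (j : ℕ) < l then r ⟨j, h⟩ else k)
    (M M' : Matrix (Fin m) (Fin m) (ZMod (p ^ k))) (hM : IsUnit M) (hM' : IsUnit M') :
    rowSpace (P * M) = rowSpace (P * M') ↔
      ∀ i j : Fin m, i < j → rext j - rext i ≤ pDeg p k ((M * M'⁻¹) i j) :=
  stmt4_general p hp k l m hlm r hmono hr P hP rext hrext M M' hM hM'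
end

section
/- Let σ be a permutation of {1,…,m} and let P ∈ (Z/p^k Z)^{l×m} with P_{i,j} = δ_{i,j}·p^{r_i} (0 ≤ r_1 ≤ ⋯ ≤ r_l < k, r_i := k for i > l). If r_{σ(i)} = r_i for all i, then the permutation matrix of σ is P-equivalent to the identity, i.e., ⟨Pσ⟩ = ⟨P⟩, where σ also denotes its permutation matrix. -/
/-- The permutation matrix of `τ`, with `(i,j)` entry `δ_{i, τ j}`. -/
def permMat {R : Type*} [CommRing R] {m : ℕ} (τ : Equiv.Perm (Fin m)) :
    Matrix (Fin m) (Fin m) R :=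
  fun i j => if i = τ j then 1 else 0

/-
The permutation `σ` preserves the extended exponents, and `rext j < k` holds exactly for the
columns `j < l`; so `σ` maps these columns to themselves and restricts to a permutation `τ` of
`Fin l`. As `P` is diagonal and `r ∘ τ = r`, multiplying `P` by the permutation matrix of `σ`
merely permutes its rows by `τ`, which does not change the subgroup they generate.
-/

open Equiv Function

section

variable {R : Type*} [CommRing R] {l m : ℕ}

theorem mul_permMat_apply (A : Matrix (Fin l) (Fin m) R) (σ : Perm (Fin m)) (i : Fin l)
    (j : Fin m) : (A * (permMat σ : Matrix (Fin m) (Fin m) R)) i j = A i (σ j) := by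
  simp [Matrix.mul_apply, permMat, mul_ite, Finset.sum_ite_eq']

theorem rowSpace_submatrix_perm (A : Matrix (Fin l) (Fin m) R) (τ : Perm (Fin l)) :
    rowSpace (A.submatrix τ id) = rowSpace A :=
  congrArg AddSubgroup.closure (τ.surjective.range_comp fun i => A i)

theorem Equiv.Perm.exists_castLE_comm (hlm : l ≤ m) (σ : Perm (Fin m))
    (hσ : ∀ j : Fin m, (j : ℕ) < l → (σ j : ℕ) < l) :
    ∃ τ : Perm (Fin l), ∀ i, Fin.castLE hlm (τ i) = σ (Fin.castLE hlm i) := by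
  let f : Fin l → Fin l := fun i => ⟨σ (Fin.castLE hlm i), hσ _ i.2⟩
  have hf : Injective f := fun a b hab => by
    simp only [f, Fin.mk.injEq, Fin.val_inj] at hab
    exact Fin.castLE_injective hlm (σ.injective hab)
  exact ⟨Equiv.ofBijective f (Finite.injective_iff_bijective.mp hf), fun i => Fin.ext rfl⟩

theorem mul_permMat_eq_submatrix_of_diagonal (hlm : l ≤ m) (d : Fin l → R)
    (P : Matrix (Fin l) (Fin m) R) (hP : ∀ i j, P i j = if (i : ℕ) = (j : ℕ) then d i else 0)
    (σ : Perm (Fin m)) (τ : Perm (Fin l))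
    (hτ : ∀ i, Fin.castLE hlm (τ i) = σ⁻¹ (Fin.castLE hlm i)) (hd : ∀ i, d (τ i) = d i) :
    P * (permMat σ : Matrix (Fin m) (Fin m) R) = P.submatrix τ id := by
  refine Matrix.ext fun i c => ?_
  have hdiag : (i : ℕ) = σ c ↔ (τ i : ℕ) = c := by
    rw [← Fin.val_castLE hlm i, ← Fin.val_castLE hlm (τ i), hτ, ← Fin.ext_iff, ← Fin.ext_iff,
      Perm.inv_eq_iff_eq]
  rw [mul_permMat_apply, Matrix.submatrix_apply, hP, hP, hd, if_congr hdiag rfl rfl, id]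

end

theorem stmt15_general (p : ℕ) (k : ℕ) (l m : ℕ) (hlm : l ≤ m)
    (r : Fin l → ℕ) (hr : ∀ i, r i < k)
    (P : Matrix (Fin l) (Fin m) (ZMod (p ^ k)))
    (hP : ∀ i j, P i j = if (i : ℕ) = (j : ℕ) then (p : ZMod (p ^ k)) ^ (r i) else 0)
    (rext : Fin m → ℕ) (hrext : ∀ j : Fin m, rext j = if h : (j : ℕ) < l then r ⟨j, h⟩ else k)
    (σ : Equiv.Perm (Fin m)) (hσ : ∀ i, rext (σ i) = rext i) :
    rowSpace (P * permMat σ) = rowSpace P := by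
  have hrext_castLE : ∀ i : Fin l, rext (Fin.castLE hlm i) = r i := fun i => by
    rw [hrext, dif_pos (Fin.val_castLE hlm i ▸ i.2)]; rfl
  have hlt_iff : ∀ j : Fin m, rext j < k ↔ (j : ℕ) < l := fun j => by
    rw [hrext]; split_ifs with h <;> simp [h, hr]
  have hσinv : ∀ j, rext (σ⁻¹ j) = rext j := fun j => by
    simpa using (hσ (σ⁻¹ j)).symm
  obtain ⟨τ, hτ⟩ := σ⁻¹.exists_castLE_comm hlm fun j hj => by
    rwa [← hlt_iff, hσinv, hlt_iff]
  have hrτ : ∀ i, r (τ i) = r i := fun i => by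
    rw [← hrext_castLE, hτ, hσinv, hrext_castLE]
  -- Not a `rw`: the product in the goal elaborates through the `CStarMatrix` instance, which
  -- agrees with the `Matrix` one only up to unfolding.
  exact (congrArg rowSpace (mul_permMat_eq_submatrix_of_diagonal hlm _ P hP σ τ hτ
    fun i => by rw [hrτ])).trans (rowSpace_submatrix_perm P τ)

/-- If a permutation `σ` of the columns satisfies `r (σ i) = r i` for the extended
exponent sequence, then the permutation matrix of `σ` is `P`-equivalent to the identity:
`⟨P σ⟩ = ⟨P⟩`. -/
theorem stmt15 (p : ℕ) (hp : p.Prime) (k : ℕ) (hk : 1 ≤ k) (l m : ℕ) (hlm : l ≤ m)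
    (r : Fin l → ℕ) (hmono : Monotone r) (hr : ∀ i, r i < k)
    (P : Matrix (Fin l) (Fin m) (ZMod (p ^ k)))
    (hP : ∀ i j, P i j = if (i : ℕ) = (j : ℕ) then (p : ZMod (p ^ k)) ^ (r i) else 0)
    (rext : Fin m → ℕ) (hrext : ∀ j : Fin m, rext j = if h : (j : ℕ) < l then r ⟨j, h⟩ else k)
    (σ : Equiv.Perm (Fin m)) (hσ : ∀ i, rext (σ i) = rext i) :
    rowSpace (P * permMat σ) = rowSpace P :=
  stmt15_general p k l m hlm r hr P hP rext hrext σ hσ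
end
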